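/- arXiv:1912.09547 — 4 statements merged into one kernel-verified Lean document; each statement's English description precedes it below -/
import Mathlib

section
/- Let n be a positive integer, let W be an invertible n×n real matrix, and let λ₁, …, λₙ denote the eigenvalues of the symmetric positive definite matrix WᵀW (the squared singular values of W). Then the determinant of the linear endomorphism L of the space of n×n real matrices defined by L(E) = E + (W⁻¹ · E · W⁻¹)ᵀ equals ∏ᵢ (1 + λᵢ⁻¹) · ∏_{i<j} (1 − λᵢ⁻¹ λⱼ⁻¹). -/
open Matrix Finset

/-- The linear map `E ↦ E + (W⁻¹ E W⁻¹)ᵀ` on `n × n` real matrices. -/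
noncomputable def lemma1Deriv (n : ℕ) (W : Matrix (Fin n) (Fin n) ℝ) :
    Matrix (Fin n) (Fin n) ℝ →ₗ[ℝ] Matrix (Fin n) (Fin n) ℝ where
  toFun E := E + (W⁻¹ * E * W⁻¹)ᵀ
  map_add' E F := by
    simp [Matrix.mul_add, Matrix.add_mul, Matrix.transpose_add]
    abel
  map_smul' c E := by
    simp [Matrix.mul_smul, Matrix.smul_mul, Matrix.transpose_smul, smul_add]

/-!
Writing `WᵀW Q = Q Λ` with `Q` orthogonal and `Λ = diag λ`, the change of variables
`E = W Q G Qᵀ` conjugates `L` into `G ↦ G + Λ⁻¹ Gᵀ`, i.e. `Gᵢⱼ ↦ Gᵢⱼ + λᵢ⁻¹ Gⱼᵢ`. This map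
multiplies each diagonal entry by `1 + λᵢ⁻¹` and acts on each pair `(Gᵢⱼ, Gⱼᵢ)`, `i < j`, by
`[[1, λᵢ⁻¹], [λⱼ⁻¹, 1]]`. Factoring every such block as upper unipotent · diagonal · lower
unipotent factors the whole map as (nilpotent perturbation of `1`) ∘ (entrywise scaling) ∘
(nilpotent perturbation of `1`), whose determinant is the product of the scaling factors.
-/

namespace LinearMap

variable {R M : Type*} [CommRing R] [AddCommGroup M] [Module R M]

lemma det_one_add_of_isNilpotent [IsDomain R] [Module.Free R M] [Module.Finite R M]
    {φ : Module.End R M} (hφ : IsNilpotent φ) : LinearMap.det (1 + φ) = 1 := by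
  have h := eval_charpoly (-φ) 1
  rw [hφ.neg.charpoly_eq_X_pow_finrank] at h
  simpa [sub_neg_eq_add] using h.symm

lemma det_eq_of_comp_eq_comp {f g : Module.End R M} (e : M ≃ₗ[R] M) (h : f ∘ₗ e = e ∘ₗ g) :
    LinearMap.det f = LinearMap.det g := by
  rw [← det_conj g e, ← comp_assoc, ← h, comp_assoc]
  simp

end LinearMap

namespace Matrix

variable {m n R : Type*} [CommRing R]

def hadamardLeft (c : Matrix m n R) : Module.End R (Matrix m n R) where
  toFun G := c ⊙ G
  map_add' G H := hadamard_add c G H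
  map_smul' r G := by simp [hadamard_smul]

@[simp]
lemma hadamardLeft_apply (c G : Matrix m n R) : hadamardLeft c G = c ⊙ G := rfl

lemma det_hadamardLeft [Fintype m] [Fintype n] [DecidableEq m] [DecidableEq n]
    (c : Matrix m n R) : LinearMap.det (hadamardLeft c) = ∏ i, ∏ j, c i j := by
  let e : (m × n → R) ≃ₗ[R] Matrix m n R := (LinearEquiv.curry R R m n).trans (ofLinearEquiv R)
  have h : hadamardLeft c = e ∘ₗ toLin' (diagonal fun p : m × n => c p.1 p.2) ∘ₗ e.symm := by
    ext G i j
    simp [e, mulVec_diagonal, hadamard_apply]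
  rw [h, LinearMap.det_conj, LinearMap.det_toLin', det_diagonal, Fintype.prod_prod_type]

def hadamardTranspose (c : Matrix m m R) : Module.End R (Matrix m m R) :=
  hadamardLeft c ∘ₗ (transposeLinearEquiv m m R R).toLinearMap

@[simp]
lemma hadamardTranspose_apply (c G : Matrix m m R) : hadamardTranspose c G = c ⊙ Gᵀ := rfl

lemma hadamardTranspose_sq_eq_zero {c : Matrix m m R} (hc : ∀ i j, c i j * c j i = 0) :
    hadamardTranspose c ^ 2 = 0 := by
  ext G i j
  simp [pow_two, hadamard_apply, ← mul_assoc, hc]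

lemma det_one_add_hadamardTranspose_of_mul_eq_zero [Fintype m] [DecidableEq m] [IsDomain R]
    {c : Matrix m m R} (hc : ∀ i j, c i j * c j i = 0) :
    LinearMap.det (1 + hadamardTranspose c) = 1 :=
  LinearMap.det_one_add_of_isNilpotent ⟨2, hadamardTranspose_sq_eq_zero hc⟩

section LinearOrder

variable [LinearOrder m] (μ : m → R)

/-- On the pair `(Gᵢⱼ, Gⱼᵢ)`, `i < j`, this is the factorization
`[[1, a], [b, 1]] = [[1, a], [0, 1]] * [[1 - a b, 0], [0, 1]] * [[1, 0], [b, 1]]`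
with `a = μ i`, `b = μ j`. -/
lemma one_add_hadamardTranspose_eq_triangular_comp :
    1 + hadamardTranspose (of fun i _ => μ i) =
      (1 + hadamardTranspose (of fun i j => if i < j then μ i else 0)) ∘ₗ
        hadamardLeft (of fun i j =>
          if i < j then 1 - μ i * μ j else if i = j then 1 + μ i else 1) ∘ₗ
        (1 + hadamardTranspose (of fun i j => if j < i then μ i else 0)) := by
  ext G i j
  rcases lt_trichotomy i j with h | rfl | h
  · simp [hadamard_apply, h, h.not_gt, h.ne']
    ring
  · simp [hadamard_apply]
    ring
  · simp [hadamard_apply, h, h.not_gt, h.ne']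

lemma det_one_add_hadamardTranspose [Fintype m] [LocallyFiniteOrderTop m] [IsDomain R] :
    LinearMap.det (1 + hadamardTranspose (of fun i _ => μ i)) =
      (∏ i, (1 + μ i)) * ∏ i, ∏ j ∈ Ioi i, (1 - μ i * μ j) := by
  rw [one_add_hadamardTranspose_eq_triangular_comp, LinearMap.det_comp, LinearMap.det_comp,
    det_one_add_hadamardTranspose_of_mul_eq_zero, det_one_add_hadamardTranspose_of_mul_eq_zero,
    det_hadamardLeft, one_mul, mul_one, ← prod_mul_distrib]
  · refine prod_congr rfl fun i _ => ?_
    simp only [of_apply]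
    rw [prod_ite, filter_lt_eq_Ioi, prod_ite_eq]
    simp [mul_comm]
  all_goals
    intro i j
    simp only [of_apply]
    split_ifs <;> simp_all [lt_asymm]

end LinearOrder

lemma transpose_inv_mul_of_mul_eq_mul_diagonal {K : Type*} [Field K] [Fintype m]
    [DecidableEq m] {W P : Matrix m m K} (hW : IsUnit W) {d : m → K} (hd : ∀ i, d i ≠ 0)
    (hP : Wᵀ * W * P = P * diagonal d) :
    (W⁻¹)ᵀ * P = W * P * diagonal d⁻¹ := by
  have hdd : diagonal d * diagonal d⁻¹ = 1 := by
    rw [diagonal_mul_diagonal, ← diagonal_one]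
    exact congrArg diagonal (funext fun i => mul_inv_cancel₀ (hd i))
  have hWinv : (W⁻¹)ᵀ * Wᵀ = 1 := by
    rw [← transpose_mul, mul_nonsing_inv _ ((isUnit_iff_isUnit_det W).mp hW), transpose_one]
  calc (W⁻¹)ᵀ * P = (W⁻¹)ᵀ * (P * diagonal d * diagonal d⁻¹) := by
        rw [Matrix.mul_assoc, hdd, Matrix.mul_one]
    _ = (W⁻¹)ᵀ * Wᵀ * (W * P * diagonal d⁻¹) := by
        rw [← hP]
        simp only [Matrix.mul_assoc]
    _ = W * P * diagonal d⁻¹ := by rw [hWinv, Matrix.one_mul]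

lemma IsHermitian.mul_eigenvectorUnitary {𝕜 : Type*} [RCLike 𝕜] [Fintype m] [DecidableEq m]
    {A : Matrix m m 𝕜} (hA : A.IsHermitian) :
    A * (hA.eigenvectorUnitary : Matrix m m 𝕜) =
      (hA.eigenvectorUnitary : Matrix m m 𝕜) * diagonal (RCLike.ofReal ∘ hA.eigenvalues) := by
  nth_rw 1 [hA.spectral_theorem]
  simp [Matrix.mul_assoc]

end Matrix

lemma det_lemma1Deriv_eq_of_mul_eq_mul_diagonal {n : ℕ} {W P : Matrix (Fin n) (Fin n) ℝ}
    (hW : IsUnit W) (hP : IsUnit P) {d : Fin n → ℝ} (hd : ∀ i, d i ≠ 0)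
    (hWP : Wᵀ * W * P = P * diagonal d) :
    LinearMap.det (lemma1Deriv n W) =
      LinearMap.det (1 + hadamardTranspose (of fun i _ => (d i)⁻¹)) := by
  let e := (Units.mulRightLinearEquiv ℝ ((isUnit_transpose P).mpr hP).unit).trans
    (Units.mulLeftLinearEquiv ℝ _ (hW.mul hP).unit)
  refine LinearMap.det_eq_of_comp_eq_comp e (LinearMap.ext fun G => ?_)
  have hWinv : W⁻¹ * W = 1 := nonsing_inv_mul _ ((isUnit_iff_isUnit_det W).mp hW)
  simp only [e, lemma1Deriv, LinearMap.coe_comp, LinearEquiv.coe_coe, Function.comp_apply,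
    LinearEquiv.trans_apply, Units.mulRightLinearEquiv_apply, Units.mulLeftLinearEquiv_apply,
    IsUnit.unit_spec, LinearMap.coe_mk, AddHom.coe_mk, LinearMap.add_apply,
    Module.End.one_apply, hadamardTranspose_apply]
  calc W * P * (G * Pᵀ) + (W⁻¹ * (W * P * (G * Pᵀ)) * W⁻¹)ᵀ
      = W * P * (G * Pᵀ) + (W⁻¹)ᵀ * P * Gᵀ * Pᵀ := by
        simp only [← Matrix.mul_assoc, hWinv, Matrix.one_mul, transpose_mul, transpose_transpose]
    _ = W * P * ((G + diagonal d⁻¹ * Gᵀ) * Pᵀ) := by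
        rw [transpose_inv_mul_of_mul_eq_mul_diagonal hW hd hWP]
        simp only [Matrix.add_mul, Matrix.mul_add, Matrix.mul_assoc]
    _ = W * P * ((G + (of fun i _ => (d i)⁻¹) ⊙ Gᵀ) * Pᵀ) := by
        congr 3
        ext i j
        simp [diagonal_mul, hadamard_apply]

theorem stmt_1_general (n : ℕ) (W : Matrix (Fin n) (Fin n) ℝ) (hW : IsUnit W)
    (hH : (Wᵀ * W).IsHermitian) :
    LinearMap.det (lemma1Deriv n W) =
      (∏ i : Fin n, (1 + (hH.eigenvalues i)⁻¹)) *
        ∏ i : Fin n, ∏ j ∈ Finset.Ioi i,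
          (1 - (hH.eigenvalues i)⁻¹ * (hH.eigenvalues j)⁻¹) := by
  have hpos : (Wᵀ * W).PosDef := by
    simpa [conjTranspose_eq_transpose_of_trivial] using
      PosDef.conjTranspose_mul_self W (mulVec_injective_iff_isUnit.mpr hW)
  have hWQ : Wᵀ * W * hH.eigenvectorUnitary =
      (hH.eigenvectorUnitary : Matrix (Fin n) (Fin n) ℝ) * diagonal hH.eigenvalues := by
    simpa [RCLike.ofReal_real_eq_id] using hH.mul_eigenvectorUnitary
  rw [det_lemma1Deriv_eq_of_mul_eq_mul_diagonal hW (Unitary.toUnits hH.eigenvectorUnitary).isUnit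
    (fun i => (hpos.eigenvalues_pos i).ne') hWQ, det_one_add_hadamardTranspose]

/-- The Jacobian of the transformation `W ↦ W − (Wᵀ)⁻¹` (nonsingular case of
Lemma 1): the determinant of `E ↦ E + (W⁻¹ E W⁻¹)ᵀ` equals
`∏ᵢ (1 + λᵢ⁻¹) ∏_{i<j} (1 − λᵢ⁻¹ λⱼ⁻¹)`, where `λᵢ` are the eigenvalues of
`WᵀW`. -/
theorem stmt_1 (n : ℕ) (hn : 0 < n) (W : Matrix (Fin n) (Fin n) ℝ) (hW : IsUnit W)
    (hH : (Wᵀ * W).IsHermitian) :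
    LinearMap.det (lemma1Deriv n W) =
      (∏ i : Fin n, (1 + (hH.eigenvalues i)⁻¹)) *
        ∏ i : Fin n, ∏ j ∈ Finset.Ioi i,
          (1 - (hH.eigenvalues i)⁻¹ * (hH.eigenvalues j)⁻¹) :=
  stmt_1_general n W hW hH
end

section
/- Let n, m, p be positive integers, let H₁ be an n×p real matrix with H₁ᵀH₁ = I_p, let Q₁ be an m×p real matrix with Q₁ᵀQ₁ = I_p, and let D be an invertible p×p diagonal real matrix. Set W = H₁·D·Q₁ᵀ, G = Q₁·D⁻¹·H₁ᵀ, and U = W − Gᵀ. Then UᵀU = Q₁·(D − D⁻¹)²·Q₁ᵀ; in particular the squared singular values of U are (dᵢ − dᵢ⁻¹)², where dᵢ are the diagonal entries of D. -/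
open Matrix

/-- For `W = H₁ D Q₁ᵀ` the nonsingular part of a singular value decomposition
(`H₁ᵀH₁ = Q₁ᵀQ₁ = I_p`, `D` diagonal invertible), `G = Q₁ D⁻¹ H₁ᵀ = W⁺` and
`U = W − Gᵀ`, one has `UᵀU = Q₁ (D − D⁻¹)² Q₁ᵀ`; in particular the squared
singular values of `U` are `(dᵢ − dᵢ⁻¹)²`. -/
theorem stmt_5 (n m p : ℕ) (hn : 0 < n) (hm : 0 < m) (hp : 0 < p)
    (H₁ : Matrix (Fin n) (Fin p) ℝ) (Q₁ : Matrix (Fin m) (Fin p) ℝ)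
    (D : Matrix (Fin p) (Fin p) ℝ)
    (hH : H₁ᵀ * H₁ = 1) (hQ : Q₁ᵀ * Q₁ = 1)
    (hD : IsUnit D) (hDdiag : D.IsDiag)
    (W : Matrix (Fin n) (Fin m) ℝ) (hW : W = H₁ * D * Q₁ᵀ)
    (G : Matrix (Fin m) (Fin n) ℝ) (hG : G = Q₁ * D⁻¹ * H₁ᵀ)
    (U : Matrix (Fin n) (Fin m) ℝ) (hU : U = W - Gᵀ) :
    Uᵀ * U = Q₁ * (D - D⁻¹) ^ 2 * Q₁ᵀ := by
  have hDsym : Dᵀ = D := hDdiag.isSymm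
  have hDinvsym : (D⁻¹)ᵀ = D⁻¹ := by rw [Matrix.transpose_nonsing_inv, hDsym]
  have hU' : U = H₁ * (D - D⁻¹) * Q₁ᵀ := by
    rw [hU, hW, hG]
    simp [Matrix.transpose_mul, hDinvsym, Matrix.mul_sub, Matrix.sub_mul,
      Matrix.mul_assoc]
  rw [hU']
  have : (H₁ * (D - D⁻¹) * Q₁ᵀ)ᵀ = Q₁ * (D - D⁻¹) * H₁ᵀ := by
    simp [Matrix.transpose_mul, Matrix.transpose_sub, hDsym, hDinvsym,
      Matrix.mul_assoc]
  rw [this, sq]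
  calc Q₁ * (D - D⁻¹) * H₁ᵀ * (H₁ * (D - D⁻¹) * Q₁ᵀ)
      = Q₁ * (D - D⁻¹) * (H₁ᵀ * H₁) * ((D - D⁻¹) * Q₁ᵀ) := by
        simp [Matrix.mul_assoc]
    _ = Q₁ * ((D - D⁻¹) * (D - D⁻¹)) * Q₁ᵀ := by
        rw [hH]; simp [Matrix.mul_assoc]
end

section
/- Let α, β > 0 be real numbers and let h : ℝ → ℝ≥0∞ be a measurable function. Let φ : ℝ → ℝ be φ(z) = β·(αz/2 + √((αz/2)² + 1))², and let μ be the measure on ℝ with density z ↦ h(z²) with respect to Lebesgue measure. Then the pushforward measure of μ under φ equals the measure on ℝ with density, with respect to Lebesgue measure, t ↦ ENNReal.ofReal(t^(−3/2)·(t + β)/(2·α·√β)) · h((1/α²)·(t/β + β/t − 2)) for t > 0 and 0 for t ≤ 0. -/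
/-!
Put `α z / 2 = sinh a`. Then `β (α z / 2 + √((α z / 2)² + 1))² = β e^{2a}`, so the map is a
diffeomorphism of `ℝ` onto `(0, ∞)` with derivative `α β e^{2a} / cosh a`. For `t = β e^{2a}`,
`t / β + β / t - 2 = 4 sinh² a = α² z²`, and the prefactor `t^{-3/2} (t + β) / (2 α √β)` equals
`cosh a / (α β e^{2a})`, the reciprocal of the derivative. The one-dimensional change of variables
formula then identifies the two measures.
-/

open MeasureTheory Real Set Function
open scoped ENNReal

theorem MeasureTheory.map_withDensity_eq_withDensity_indicator_range {φ φ' : ℝ → ℝ}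
    {f g : ℝ → ℝ≥0∞} (hφ' : ∀ z, HasDerivAt φ (φ' z) z) (hφ : Injective φ)
    (hfg : ∀ z, ENNReal.ofReal |φ' z| * f (φ z) = g z) :
    (volume.withDensity g).map φ = volume.withDensity ((range φ).indicator f) := by
  have hemb : MeasurableEmbedding φ :=
    (continuous_iff_continuousAt.2 fun z => (hφ' z).continuousAt).measurableEmbedding hφ
  ext s hs
  rw [hemb.map_apply, withDensity_apply _ hs, lintegral_indicator hemb.measurableSet_range,
    Measure.restrict_restrict hemb.measurableSet_range, ← image_preimage_eq_range_inter,
    lintegral_image_eq_lintegral_abs_deriv_mul (hemb.measurable hs)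
      (fun z _ => (hφ' z).hasDerivWithinAt) hφ.injOn, withDensity_apply _ (hemb.measurable hs)]
  simp_rw [hfg]

lemma Real.rpow_neg_three_halves {t : ℝ} (ht : 0 ≤ t) : t ^ (-(3 / 2) : ℝ) = (t * √t)⁻¹ := by
  rw [rpow_neg ht, show (3 / 2 : ℝ) = 1 + 1 / 2 by norm_num, rpow_add' ht (by norm_num),
    rpow_one, sqrt_eq_rpow]

namespace BirnbaumSaunders

variable {α β : ℝ}

noncomputable def transform (α β z : ℝ) : ℝ := β * (α * z / 2 + √((α * z / 2) ^ 2 + 1)) ^ 2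

noncomputable def density (α β : ℝ) (h : ℝ → ℝ≥0∞) (t : ℝ) : ℝ≥0∞ :=
  ENNReal.ofReal (t ^ (-(3 / 2) : ℝ) * (t + β) / (2 * α * √β)) *
    h ((1 / α ^ 2) * (t / β + β / t - 2))

lemma transform_eq_exp_arsinh (α β z : ℝ) :
    transform α β z = β * exp (2 * arsinh (α * z / 2)) := by
  rw [transform, ← Nat.cast_ofNat, exp_nat_mul, exp_arsinh, add_comm 1]

lemma transform_injective (hα : α ≠ 0) (hβ : β ≠ 0) : Injective (transform α β) := by
  intro z₁ z₂ h
  simpa [transform_eq_exp_arsinh, hα, hβ] using h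

lemma range_transform (hα : α ≠ 0) (hβ : 0 < β) : range (transform α β) = Ioi 0 := by
  refine Subset.antisymm ?_ fun t (ht : 0 < t) => ?_
  · rintro _ ⟨z, rfl⟩
    rw [transform_eq_exp_arsinh]
    exact mul_pos hβ (exp_pos _)
  · refine ⟨2 / α * sinh (log (t / β) / 2), ?_⟩
    have hz : α * (2 / α * sinh (log (t / β) / 2)) / 2 = sinh (log (t / β) / 2) := by
      field_simp
    rw [transform_eq_exp_arsinh, hz, arsinh_sinh, mul_div_cancel₀ _ two_ne_zero,
      exp_log (div_pos ht hβ), mul_div_cancel₀ _ hβ.ne']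

lemma hasDerivAt_transform (α β z : ℝ) :
    HasDerivAt (transform α β) (α * transform α β z / cosh (arsinh (α * z / 2))) z := by
  have hu : HasDerivAt (fun z => α * z / 2) (α / 2) z := by
    simpa using ((hasDerivAt_id z).const_mul α).div_const 2
  rw [show transform α β = fun z => β * exp (2 * arsinh (α * z / 2)) from
    funext (transform_eq_exp_arsinh α β)]
  refine (hu.arsinh.const_mul 2).exp.const_mul β |>.congr_deriv ?_
  have : 0 < √(1 + (α * z / 2) ^ 2) := sqrt_pos.2 (by positivity)
  rw [cosh_arsinh, smul_eq_mul]
  field_simp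

lemma density_mul_exp_two_mul (hα : 0 < α) (hβ : 0 < β) (h : ℝ → ℝ≥0∞) (a : ℝ) :
    density α β h (β * exp (2 * a)) =
      ENNReal.ofReal (cosh a / (α * (β * exp (2 * a)))) * h ((2 * sinh a / α) ^ 2) := by
  have hexp : exp (2 * a) = exp a ^ 2 := by rw [← Nat.cast_ofNat, exp_nat_mul]
  have hsqrt : √(β * exp a ^ 2) = √β * exp a := by rw [sqrt_mul hβ.le, sqrt_sq (exp_pos a).le]
  have hβ' : √β ^ 2 = β := sq_sqrt hβ.le
  rw [density, hexp, rpow_neg_three_halves (by positivity), hsqrt, cosh_eq, sinh_eq, exp_neg]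
  congr 2
  · have := exp_pos a
    have := sqrt_pos.2 hβ
    field_simp
    linear_combination -hβ'
  · have := exp_pos a
    field_simp
    ring

lemma ofReal_abs_deriv_mul_density (hα : 0 < α) (hβ : 0 < β) (h : ℝ → ℝ≥0∞) (z : ℝ) :
    ENNReal.ofReal |α * transform α β z / cosh (arsinh (α * z / 2))| *
      density α β h (transform α β z) = h (z ^ 2) := by
  have hz : 2 * sinh (arsinh (α * z / 2)) / α = z := by
    rw [sinh_arsinh]
    field_simp
  rw [transform_eq_exp_arsinh, density_mul_exp_two_mul hα hβ, hz, ← mul_assoc]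
  set c := cosh (arsinh (α * z / 2))
  have hc : 0 < c := cosh_pos _
  have hderiv : 0 < α * (β * exp (2 * arsinh (α * z / 2))) := by positivity
  have hinv : α * (β * exp (2 * arsinh (α * z / 2))) / c *
      (c / (α * (β * exp (2 * arsinh (α * z / 2))))) = 1 := by
    field_simp
  rw [abs_of_pos (div_pos hderiv hc), ← ENNReal.ofReal_mul (div_pos hderiv hc).le, hinv,
    ENNReal.ofReal_one, one_mul]

end BirnbaumSaunders

theorem stmt_17_general (α β : ℝ) (hα : 0 < α) (hβ : 0 < β)
    (h : ℝ → ℝ≥0∞) :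
    Measure.map (fun z : ℝ => β * (α * z / 2 + Real.sqrt ((α * z / 2) ^ 2 + 1)) ^ 2)
        (volume.withDensity fun z : ℝ => h (z ^ 2)) =
      volume.withDensity fun t : ℝ =>
        if 0 < t then
          ENNReal.ofReal (t ^ (-(3 / 2) : ℝ) * (t + β) / (2 * α * Real.sqrt β)) *
            h ((1 / α ^ 2) * (t / β + β / t - 2))
        else 0 := by
  have hmap := map_withDensity_eq_withDensity_indicator_range
    (BirnbaumSaunders.hasDerivAt_transform α β)
    (BirnbaumSaunders.transform_injective hα.ne' hβ.ne')
    (BirnbaumSaunders.ofReal_abs_deriv_mul_density hα hβ h)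
  rw [BirnbaumSaunders.range_transform hα.ne' hβ] at hmap
  refine hmap.trans (congrArg _ (funext fun t => ?_))
  by_cases ht : 0 < t <;> simp [ht, BirnbaumSaunders.density]

/-- If `Z` has density `z ↦ h(z²)` with respect to Lebesgue measure, then
`T = β (αZ/2 + √((αZ/2)² + 1))²` has the generalised Birnbaum–Saunders density
`t ↦ (t^(−3/2)(t + β)/(2α√β)) · h((1/α²)(t/β + β/t − 2))` on `t > 0`
(equation (3) of the paper), formulated as an identity of measures. -/
theorem stmt_17 (α β : ℝ) (hα : 0 < α) (hβ : 0 < β)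
    (h : ℝ → ℝ≥0∞) (hh : Measurable h) :
    Measure.map (fun z : ℝ => β * (α * z / 2 + Real.sqrt ((α * z / 2) ^ 2 + 1)) ^ 2)
        (volume.withDensity fun z : ℝ => h (z ^ 2)) =
      volume.withDensity fun t : ℝ =>
        if 0 < t then
          ENNReal.ofReal (t ^ (-(3 / 2) : ℝ) * (t + β) / (2 * α * Real.sqrt β)) *
            h ((1 / α ^ 2) * (t / β + β / t - 2))
        else 0 :=
  stmt_17_general α β hα hβ h
end

section
/- Let α, β > 0 be real numbers and let h : ℝ → ℝ≥0∞ be a measurable function. Let φ_V : ℝ → ℝ be φ_V(z) = √β·(αz/2 + √((αz/2)² + 1)), and let μ be the measure on ℝ with density z ↦ h(z²) with respect to Lebesgue measure. Then the pushforward measure of μ under φ_V equals the measure on ℝ with density, with respect to Lebesgue measure, v ↦ ENNReal.ofReal((1 + β·v⁻²)/(α·√β)) · h((1/α²)·(v²/β + β/v² − 2)) for v > 0 and 0 for v ≤ 0. -/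
/-!
On `v > 0` the map `v ↦ (1/α)(v/√β − √β/v)` is a differentiable bijection onto `ℝ`, with inverse
`φ_V` and derivative `(1 + β v⁻²)/(α√β) > 0`. The one-dimensional change of variables formula
therefore identifies the pushforward of `h(z²) dz` under `φ_V` with
`(1 + β v⁻²)/(α√β) · h(((1/α)(v/√β − √β/v))²) dv` on `v > 0`, and expanding the square gives the
stated density.
-/

open MeasureTheory Set
open scoped ENNReal

namespace MeasureTheory

theorem map_withDensity_comp_eq_withDensity_abs_deriv_mul {s : Set ℝ} (hs : MeasurableSet s)
    {φ ψ ψ' : ℝ → ℝ} (hφ : Measurable φ) (hψ' : ∀ x ∈ s, HasDerivWithinAt ψ (ψ' x) s x)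
    (hφψ : ∀ x ∈ s, φ (ψ x) = x) (hψφ : ∀ z, ψ (φ z) = z) (hφs : ∀ z, φ z ∈ s)
    (g : ℝ → ℝ≥0∞) :
    Measure.map φ (volume.withDensity fun z => g (φ z)) =
      (volume.restrict s).withDensity fun x => ENNReal.ofReal |ψ' x| * g x := by
  ext t ht
  have hpreimage : φ ⁻¹' t = ψ '' (t ∩ s) := by
    ext z
    refine ⟨fun hz => ⟨φ z, ⟨hz, hφs z⟩, hψφ z⟩, ?_⟩
    rintro ⟨x, ⟨hxt, hxs⟩, rfl⟩
    simpa [mem_preimage, hφψ x hxs] using hxt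
  have hinj : InjOn ψ (t ∩ s) := fun x hx y hy hxy => by
    rw [← hφψ x hx.2, ← hφψ y hy.2, hxy]
  rw [Measure.map_apply hφ ht, withDensity_apply _ (hφ ht), withDensity_apply _ ht,
    Measure.restrict_restrict ht, hpreimage,
    lintegral_image_eq_lintegral_abs_deriv_mul (ht.inter hs)
      (fun x hx => (hψ' x hx.2).mono inter_subset_right) hinj]
  exact setLIntegral_congr_fun (ht.inter hs) fun x hx => by rw [hφψ x hx.2]

end MeasureTheory

/-- The map `φ_V` of the paper. -/
noncomputable def sqrtBSTransform (α β z : ℝ) : ℝ :=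
  Real.sqrt β * (α * z / 2 + Real.sqrt ((α * z / 2) ^ 2 + 1))

noncomputable def sqrtBSInverse (α β v : ℝ) : ℝ :=
  (1 / α) * (v / Real.sqrt β - Real.sqrt β / v)

section

variable {α β : ℝ}

theorem measurable_sqrtBSTransform : Measurable (sqrtBSTransform α β) := by
  unfold sqrtBSTransform
  fun_prop

theorem sqrtBSTransform_pos (hβ : 0 < β) (z : ℝ) : 0 < sqrtBSTransform α β z := by
  have hroot : |α * z / 2| < Real.sqrt ((α * z / 2) ^ 2 + 1) := by
    rw [← Real.sqrt_sq_eq_abs]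
    exact Real.sqrt_lt_sqrt (sq_nonneg _) (lt_add_one _)
  exact mul_pos (Real.sqrt_pos.2 hβ) (by linarith [neg_abs_le (α * z / 2)])

theorem sqrtBSInverse_sqrtBSTransform (hα : α ≠ 0) (hβ : 0 < β) (z : ℝ) :
    sqrtBSInverse α β (sqrtBSTransform α β z) = z := by
  have hpos := sqrtBSTransform_pos (α := α) hβ z
  unfold sqrtBSInverse
  unfold sqrtBSTransform at hpos ⊢
  set w := α * z / 2 with hw
  set s := Real.sqrt (w ^ 2 + 1)
  have hs : s ^ 2 = w ^ 2 + 1 := Real.sq_sqrt (by positivity)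
  have hws : w + s ≠ 0 := by rintro h0; simp [h0] at hpos
  rw [show z = 2 * w / α by rw [hw]; field_simp]
  field_simp
  linear_combination hs

theorem sqrtBSTransform_sqrtBSInverse (hα : α ≠ 0) (hβ : 0 < β) {v : ℝ} (hv : 0 < v) :
    sqrtBSTransform α β (sqrtBSInverse α β v) = v := by
  have hhalf : α * sqrtBSInverse α β v / 2 = (v / Real.sqrt β - Real.sqrt β / v) / 2 := by
    unfold sqrtBSInverse; field_simp
  have hroot : Real.sqrt ((α * sqrtBSInverse α β v / 2) ^ 2 + 1) =
      (v / Real.sqrt β + Real.sqrt β / v) / 2 := by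
    rw [Real.sqrt_eq_iff_mul_self_eq (by positivity) (by positivity), hhalf]
    field_simp
    ring
  unfold sqrtBSTransform
  rw [hroot, hhalf]
  field_simp
  ring

theorem sqrtBSInverse_sq (hβ : 0 < β) {v : ℝ} (hv : v ≠ 0) :
    sqrtBSInverse α β v ^ 2 = (1 / α ^ 2) * (v ^ 2 / β + β / v ^ 2 - 2) := by
  unfold sqrtBSInverse
  field_simp
  rw [Real.sq_sqrt hβ.le]
  ring

theorem hasDerivAt_sqrtBSInverse (hβ : 0 < β) {v : ℝ} (hv : v ≠ 0) :
    HasDerivAt (sqrtBSInverse α β) ((1 + β * (v ^ 2)⁻¹) / (α * Real.sqrt β)) v := by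
  have hquot : HasDerivAt (fun x => Real.sqrt β / x) ((0 * v - Real.sqrt β * 1) / v ^ 2) v :=
    (hasDerivAt_const v (Real.sqrt β)).div (hasDerivAt_id' v) hv
  refine ((((hasDerivAt_id' v).div_const (Real.sqrt β)).sub hquot).const_mul (1 / α)).congr_deriv ?_
  field_simp
  linear_combination (1 / α) * Real.mul_self_sqrt hβ.le

end

theorem stmt_18_general (α β : ℝ) (hα : 0 < α) (hβ : 0 < β)
    (h : ℝ → ℝ≥0∞) :
    Measure.map (fun z : ℝ => Real.sqrt β * (α * z / 2 + Real.sqrt ((α * z / 2) ^ 2 + 1)))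
        (volume.withDensity fun z : ℝ => h (z ^ 2)) =
      volume.withDensity fun v : ℝ =>
        if 0 < v then
          ENNReal.ofReal ((1 + β * (v ^ 2)⁻¹) / (α * Real.sqrt β)) *
            h ((1 / α ^ 2) * (v ^ 2 / β + β / v ^ 2 - 2))
        else 0 := by
  have hdensity : (fun z : ℝ => h (z ^ 2)) =
      fun z => h (sqrtBSInverse α β (sqrtBSTransform α β z) ^ 2) := by
    simp only [sqrtBSInverse_sqrtBSTransform hα.ne' hβ]
  change Measure.map (sqrtBSTransform α β) _ = _
  rw [hdensity, map_withDensity_comp_eq_withDensity_abs_deriv_mul measurableSet_Ioi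
      measurable_sqrtBSTransform
      (fun v hv => (hasDerivAt_sqrtBSInverse hβ (ne_of_gt hv)).hasDerivWithinAt)
      (fun v hv => sqrtBSTransform_sqrtBSInverse hα.ne' hβ hv)
      (sqrtBSInverse_sqrtBSTransform hα.ne' hβ) (sqrtBSTransform_pos hβ)
      (fun v => h (sqrtBSInverse α β v ^ 2)),
    ← withDensity_indicator measurableSet_Ioi]
  congr 1
  funext v
  by_cases hv : 0 < v
  · rw [indicator_of_mem (mem_Ioi.2 hv), if_pos hv, sqrtBSInverse_sq hβ hv.ne',
      abs_of_pos (by positivity)]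
  · rw [indicator_of_notMem (notMem_Ioi.2 (not_lt.1 hv)), if_neg hv]

/-- If `Z` has density `z ↦ h(z²)` with respect to Lebesgue measure, then
`V = √β (αZ/2 + √((αZ/2)² + 1))` has the square root generalised
Birnbaum–Saunders density
`v ↦ ((1 + β v⁻²)/(α√β)) · h((1/α²)(v²/β + β/v² − 2))` on `v > 0`
(equation (5) of the paper), formulated as an identity of measures. -/
theorem stmt_18 (α β : ℝ) (hα : 0 < α) (hβ : 0 < β)
    (h : ℝ → ℝ≥0∞) (hh : Measurable h) :
    Measure.map (fun z : ℝ => Real.sqrt β * (α * z / 2 + Real.sqrt ((α * z / 2) ^ 2 + 1)))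
        (volume.withDensity fun z : ℝ => h (z ^ 2)) =
      volume.withDensity fun v : ℝ =>
        if 0 < v then
          ENNReal.ofReal ((1 + β * (v ^ 2)⁻¹) / (α * Real.sqrt β)) *
            h ((1 / α ^ 2) * (v ^ 2 / β + β / v ^ 2 - 2))
        else 0 :=
  stmt_18_general α β hα hβ h
end
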